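/- Let $N \trianglelefteq G$, let $R \subseteq G$ satisfy $R = R^{-1}$, and let $A \subseteq G$ be nonempty and finite. For any $C > 0$: if $|AN/N \cap RN/N| \geq \frac{1}{C}|AN/N|$ (sizes computed in $G/N$), then $|A_3 \cap RN| \geq \frac{1}{C}|A|$, where $A_3 = \{g_1 g_2 g_3 : g_i \in A \cup A^{-1} \cup \{1\}\}$. -/

import Mathlib

open scoped Pointwise

/-!
Let `π : G →* H` and let `F = A ∩ π⁻¹(π a₀)` be a largest fibre of `π` on `A`, so
`|A| ≤ |π A| · |F|`. Choosing `s q ∈ A` over each `q ∈ π A ∩ S`, the map `(q, x) ↦ s q · a₀⁻¹ · x`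
on `(π A ∩ S) × F` is injective (`π` recovers `q`) and lands in `A A⁻¹ A ∩ π⁻¹ S`. Hence
`|A| · |π A ∩ S| ≤ |π A| · |A A⁻¹ A ∩ π⁻¹ S|`; for the quotient map and `S = π R` the preimage
is `R N`.
-/

namespace Set

variable {G H : Type*} [Group G] [Group H] (π : G →* H) {A : Set G}

theorem exists_ncard_le_ncard_image_mul_ncard_fiber (hA : A.Finite) (hne : A.Nonempty) :
    ∃ a₀ ∈ A, A.ncard ≤ (π '' A).ncard * (A ∩ π ⁻¹' {π a₀}).ncard := by
  classical
  obtain ⟨a₀, ha₀, hmax⟩ := A.exists_max_image (fun a ↦ (A ∩ π ⁻¹' {π a}).ncard) hA hne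
  refine ⟨a₀, ha₀, ?_⟩
  lift A to Finset G using hA
  have hfiber (a : G) :
      ((A : Set G) ∩ π ⁻¹' {π a}).ncard = ({x ∈ A | π x = π a} : Finset G).card := by
    rw [← ncard_coe_finset, Finset.coe_filter]
    rfl
  rw [ncard_coe_finset, ← Finset.coe_image, ncard_coe_finset, mul_comm]
  refine Finset.card_le_mul_card_image A _ fun b hb ↦ ?_
  obtain ⟨a, ha, rfl⟩ := Finset.mem_image.1 hb
  simpa only [hfiber] using hmax a ha

theorem ncard_image_inter_mul_ncard_fiber_le (hA : A.Finite) {a₀ : G} (ha₀ : a₀ ∈ A) (S : Set H) :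
    (π '' A ∩ S).ncard * (A ∩ π ⁻¹' {π a₀}).ncard ≤ (A * A⁻¹ * A ∩ π ⁻¹' S).ncard := by
  rw [← ncard_prod]
  set s := Function.invFunOn π A
  have hs {q : H} (hq : q ∈ π '' A) : s q ∈ A ∧ π (s q) = q :=
    ⟨Function.invFunOn_mem hq, Function.invFunOn_eq hq⟩
  refine ncard_le_ncard_of_injOn (fun p ↦ s p.1 * a₀⁻¹ * p.2) ?_ ?_
    (((hA.mul hA.inv).mul hA).inter_of_left _)
  · rintro ⟨q, x⟩ ⟨⟨hqA, hqS⟩, hxA, hx⟩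
    refine ⟨mul_mem_mul (mul_mem_mul (hs hqA).1 (inv_mem_inv.2 ha₀)) hxA, ?_⟩
    simpa [(hs hqA).2, show π x = π a₀ from hx] using hqS
  · rintro ⟨q, x⟩ ⟨⟨hqA, -⟩, -, hx⟩ ⟨q', x'⟩ ⟨⟨hqA', -⟩, -, hx'⟩ heq
    have hq : q = q' := by
      simpa [(hs hqA).2, (hs hqA').2, show π x = π a₀ from hx, show π x' = π a₀ from hx']
        using congrArg π heq
    subst hq
    simpa using heq

theorem ncard_mul_ncard_image_inter_le (hA : A.Finite) (hne : A.Nonempty) (S : Set H) :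
    A.ncard * (π '' A ∩ S).ncard ≤ (π '' A).ncard * (A * A⁻¹ * A ∩ π ⁻¹' S).ncard := by
  obtain ⟨a₀, ha₀, hA_le⟩ := exists_ncard_le_ncard_image_mul_ncard_fiber π hA hne
  calc A.ncard * (π '' A ∩ S).ncard
      ≤ (π '' A).ncard * (A ∩ π ⁻¹' {π a₀}).ncard * (π '' A ∩ S).ncard := by gcongr
    _ = (π '' A).ncard * ((π '' A ∩ S).ncard * (A ∩ π ⁻¹' {π a₀}).ncard) := by ring
    _ ≤ (π '' A).ncard * (A * A⁻¹ * A ∩ π ⁻¹' S).ncard := by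
      gcongr
      exact ncard_image_inter_mul_ncard_fiber_le π hA ha₀ S

end Set

theorem stmt_8_general {G : Type*} [Group G] (N : Subgroup G) [N.Normal] (R A : Set G)
    (hA : A.Finite) (hne : A.Nonempty) (C : ℝ)
    (h : ((((QuotientGroup.mk : G → G ⧸ N) '' A) ∩
          ((QuotientGroup.mk : G → G ⧸ N) '' R)).ncard : ℝ) ≥
        (1 / C) * (((QuotientGroup.mk : G → G ⧸ N) '' A).ncard : ℝ)) :
    ((((A ∪ A⁻¹ ∪ {1} : Set G) ^ 3) ∩ (R * (N : Set G))).ncard : ℝ) ≥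
      (1 / C) * (A.ncard : ℝ) := by
  set π : G → G ⧸ N := QuotientGroup.mk
  set U : Set G := A ∪ A⁻¹ ∪ {1}
  have hU : U.Finite := (hA.union hA.inv).union (Set.finite_singleton 1)
  rw [pow_three']
  have hAU : A * A⁻¹ * A ⊆ U * U * U := by
    gcongr <;> intro x hx <;> simp [U, hx]
  have key : A.ncard * (π '' A ∩ π '' R).ncard ≤ (π '' A).ncard * (U * U * U ∩ (R * N)).ncard := by
    refine (Set.ncard_mul_ncard_image_inter_le (QuotientGroup.mk' N) hA hne (π '' R)).trans ?_
    rw [QuotientGroup.coe_mk', QuotientGroup.preimage_image_mk_eq_mul]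
    gcongr
    exact ((hU.mul hU).mul hU).inter_of_left _
  have hpos : (0 : ℝ) < (π '' A).ncard := by
    exact_mod_cast (Set.ncard_pos (hA.image π)).2 (hne.image π)
  refine le_of_mul_le_mul_left ?_ hpos
  calc ((π '' A).ncard : ℝ) * (1 / C * A.ncard)
      = 1 / C * (π '' A).ncard * A.ncard := by ring
    _ ≤ (π '' A ∩ π '' R).ncard * A.ncard := by gcongr
    _ ≤ (π '' A).ncard * (U * U * U ∩ (R * N)).ncard := by
      rw [mul_comm]
      exact_mod_cast key

theorem stmt_8 {G : Type*} [Group G] (N : Subgroup G) [N.Normal] (R A : Set G)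
    (hR : R⁻¹ = R) (hA : A.Finite) (hne : A.Nonempty) (C : ℝ) (hC : 0 < C)
    (h : ((((QuotientGroup.mk : G → G ⧸ N) '' A) ∩
          ((QuotientGroup.mk : G → G ⧸ N) '' R)).ncard : ℝ) ≥
        (1 / C) * (((QuotientGroup.mk : G → G ⧸ N) '' A).ncard : ℝ)) :
    ((((A ∪ A⁻¹ ∪ {1} : Set G) ^ 3) ∩ (R * (N : Set G))).ncard : ℝ) ≥
      (1 / C) * (A.ncard : ℝ) :=
  stmt_8_general N R A hA hne C h
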